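/- arXiv:1505.02212 — 3 statements merged into one kernel-verified Lean document; each statement's English description precedes it below -/
import Mathlib

section
/- Let R : [0,1] → Set ℝ assign to each x a nonempty closed interval R(x), and define f(x) = max R(x) and, for y ∈ ℝ, g(y) = min of the smallest closed interval containing {x ∈ [0,1] : y ∈ R(x)} (assumed nonempty where g is applied). If f is strictly increasing on [0,1], then f and g are inverses: for every x ∈ [0,1], g(f(x)) = x. -/
open Set

theorem StrictMonoOn.isLeast_setOf_mem_of_isGreatest {α β : Type*} [LinearOrder α]
    [Preorder β] {s : Set α} {R : α → Set β} {f : α → β} (hf : StrictMonoOn f s)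
    (hmax : ∀ x ∈ s, IsGreatest (R x) (f x)) {x : α} (hx : x ∈ s) :
    IsLeast {x' | x' ∈ s ∧ f x ∈ R x'} x := by
  refine ⟨⟨hx, (hmax x hx).1⟩, ?_⟩
  rintro x' ⟨hx', hfx_mem⟩
  exact (hf.le_iff_le hx hx').1 ((hmax x' hx').2 hfx_mem)

theorem isGreatest_sSup_of_eq_Icc {α : Type*} [ConditionallyCompleteLattice α] {R : Set α}
    {a b : α} (hab : a ≤ b) (hR : R = Icc a b) :
    IsGreatest R (sSup R) := by
  subst hR
  rw [csSup_Icc hab]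
  exact isGreatest_Icc hab

/-- If `R` assigns to each `x ∈ [0,1]` a nonempty closed (compact) interval,
`f x = max R x`, and `g y = min` of the smallest closed interval containing
`{x ∈ [0,1] : y ∈ R x}` (i.e. `g y = sInf {x ∈ [0,1] : y ∈ R x}`), and `f` is strictly
increasing on `[0,1]`, then `g (f x) = x` for every `x ∈ [0,1]`. -/
theorem stmt0 (R : ℝ → Set ℝ)
    (hR : ∀ x ∈ Set.Icc (0:ℝ) 1, ∃ a b : ℝ, a ≤ b ∧ R x = Set.Icc a b)
    (f g : ℝ → ℝ)
    (hf : ∀ x, f x = sSup (R x))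
    (hg : ∀ y, g y = sInf {x | x ∈ Set.Icc (0:ℝ) 1 ∧ y ∈ R x})
    (hmono : StrictMonoOn f (Set.Icc (0:ℝ) 1)) :
    ∀ x ∈ Set.Icc (0:ℝ) 1, g (f x) = x := by
  have hmax : ∀ x ∈ Icc (0:ℝ) 1, IsGreatest (R x) (f x) := fun x hx => by
    obtain ⟨a, b, hab, hRx⟩ := hR x hx
    exact hf x ▸ isGreatest_sSup_of_eq_Icc hab hRx
  intro x hx
  rw [hg]
  exact (hmono.isLeast_setOf_mem_of_isGreatest hmax hx).csInf_eq
end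

section
/- Let φ : Q → [0,1] be a population quantity and Φ : Q → [0,1] a property on a set Q of distributions. Define the large-sample reliable interval Rel(x) as the smallest closed interval containing φ(Φ⁻¹({x})), and the interpretable interval I(y) as the smallest closed interval containing {x : y ∈ Rel(x)}. If φ = h ∘ Φ for some strictly increasing function h : [0,1] → [0,1], then every interpretable interval is a singleton: for every y in the range of φ, I(y) has diameter 0. -/
open Set

/-! When `φ = h ∘ Φ`, every fibre `Φ⁻¹ {x}` is mapped by `φ` to the single value `h x`, so the
reliable interval at `x` is the point `{h x}`. Since `h` is injective, the only `x` whose reliable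
interval contains `y = h (Φ Z₀)` is `Φ Z₀` itself, so the interpretable interval is a point. -/

section Interpretability

variable {Q : Type*}

/-- The paper's large-sample reliable interval `Rel(x)`. -/
def reliableInterval (φ Φ : Q → ℝ) (x : ℝ) : Set ℝ :=
  Icc (sInf (φ '' (Φ ⁻¹' {x}))) (sSup (φ '' (Φ ⁻¹' {x})))

theorem image_preimage_singleton_of_comp {α β : Type*} {φ : Q → β} {Φ : Q → α} {h : α → β}
    (hcomp : ∀ Z, φ Z = h (Φ Z)) {x : α} (hx : x ∈ range Φ) :
    φ '' (Φ ⁻¹' {x}) = {h x} := by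
  have hφ : φ = h ∘ Φ := funext hcomp
  rw [hφ, image_comp, image_preimage_eq_inter_range,
    inter_eq_left.mpr (singleton_subset_iff.mpr hx), image_singleton]

theorem reliableInterval_of_comp {φ Φ : Q → ℝ} {h : ℝ → ℝ} (hcomp : ∀ Z, φ Z = h (Φ Z))
    {x : ℝ} (hx : x ∈ range Φ) : reliableInterval φ Φ x = {h x} := by
  rw [reliableInterval, image_preimage_singleton_of_comp hcomp hx, csInf_singleton,
    csSup_singleton, Icc_self]

theorem setOf_mem_reliableInterval_of_comp {φ Φ : Q → ℝ} {h : ℝ → ℝ} {s : Set ℝ}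
    (hcomp : ∀ Z, φ Z = h (Φ Z)) (hs : s ⊆ range Φ) (hinj : InjOn h s)
    {x₀ : ℝ} (hx₀ : x₀ ∈ s) :
    {x | x ∈ s ∧ h x₀ ∈ reliableInterval φ Φ x} = {x₀} := by
  ext x
  simp only [mem_ofPred_eq, mem_singleton_iff]
  constructor
  · rintro ⟨hx, hmem⟩
    rw [reliableInterval_of_comp hcomp (hs hx), mem_singleton_iff] at hmem
    exact hinj hx hx₀ hmem.symm
  · rintro rfl
    exact ⟨hx₀, by rw [reliableInterval_of_comp hcomp (hs hx₀)]; rfl⟩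

end Interpretability

theorem stmt9_general {Q : Type*} (φ Φ : Q → ℝ)
    (hΦ : ∀ Z, Φ Z ∈ Set.Icc (0:ℝ) 1)
    (hsurj : ∀ x ∈ Set.Icc (0:ℝ) 1, ∃ Z, Φ Z = x)
    (h : ℝ → ℝ) (hmono : StrictMonoOn h (Set.Icc (0:ℝ) 1))
    (hcomp : ∀ Z, φ Z = h (Φ Z)) :
    ∀ y ∈ Set.range φ,
      sSup {x | x ∈ Set.Icc (0:ℝ) 1 ∧
          y ∈ Set.Icc (sInf (φ '' (Φ ⁻¹' {x}))) (sSup (φ '' (Φ ⁻¹' {x})))} =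
      sInf {x | x ∈ Set.Icc (0:ℝ) 1 ∧
          y ∈ Set.Icc (sInf (φ '' (Φ ⁻¹' {x}))) (sSup (φ '' (Φ ⁻¹' {x})))} := by
  rintro _ ⟨Z₀, rfl⟩
  have hS : {x | x ∈ Icc (0:ℝ) 1 ∧ φ Z₀ ∈ reliableInterval φ Φ x} = {Φ Z₀} := by
    rw [hcomp Z₀]
    exact setOf_mem_reliableInterval_of_comp hcomp (fun x hx => hsurj x hx) hmono.injOn (hΦ Z₀)
  change sSup {x | x ∈ Icc (0:ℝ) 1 ∧ φ Z₀ ∈ reliableInterval φ Φ x} =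
    sInf {x | x ∈ Icc (0:ℝ) 1 ∧ φ Z₀ ∈ reliableInterval φ Φ x}
  rw [hS, csSup_singleton, csInf_singleton]

/-- perfect interpretability from monotone dependence on Φ in the
large-sample limit: with `φ, Φ : Q → [0,1]`, `Φ` surjective onto `[0,1]`,
`Rel x = Icc (sInf (φ '' Φ⁻¹ {x})) (sSup (φ '' Φ⁻¹ {x}))` (the smallest closed interval
containing `φ(Φ⁻¹({x}))`), and `I(y)` the smallest closed interval containing
`S y = {x ∈ [0,1] : y ∈ Rel x}`, if `φ = h ∘ Φ` for a strictly increasing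
`h : [0,1] → [0,1]`, then every interpretable interval at a `y` in the range of `φ` has
diameter 0, i.e. `sSup (S y) = sInf (S y)`. -/
theorem stmt9 {Q : Type*} (φ Φ : Q → ℝ)
    (hφ : ∀ Z, φ Z ∈ Set.Icc (0:ℝ) 1) (hΦ : ∀ Z, Φ Z ∈ Set.Icc (0:ℝ) 1)
    (hsurj : ∀ x ∈ Set.Icc (0:ℝ) 1, ∃ Z, Φ Z = x)
    (h : ℝ → ℝ) (hmono : StrictMonoOn h (Set.Icc (0:ℝ) 1))
    (hmaps : ∀ x ∈ Set.Icc (0:ℝ) 1, h x ∈ Set.Icc (0:ℝ) 1)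
    (hcomp : ∀ Z, φ Z = h (Φ Z)) :
    ∀ y ∈ Set.range φ,
      sSup {x | x ∈ Set.Icc (0:ℝ) 1 ∧
          y ∈ Set.Icc (sInf (φ '' (Φ ⁻¹' {x}))) (sSup (φ '' (Φ ⁻¹' {x})))} =
      sInf {x | x ∈ Set.Icc (0:ℝ) 1 ∧
          y ∈ Set.Icc (sInf (φ '' (Φ ⁻¹' {x}))) (sSup (φ '' (Φ ⁻¹' {x})))} :=
  stmt9_general φ Φ hΦ hsurj h hmono hcomp
end

section
/- Let φ : Q → [0,1] and Φ : Q → [0,1] with Φ surjective, and define Rel(x) and I(y) as in the large-sample limit (Rel(x) the smallest closed interval containing φ(Φ⁻¹({x})), I(y) the smallest closed interval containing {x : y ∈ Rel(x)}). If every interpretable interval I(y) for y in the range of φ is a singleton, then φ(Z) determines Φ(Z): for all Z₁, Z₂ ∈ Q, φ(Z₁) = φ(Z₂) implies Φ(Z₁) = Φ(Z₂). -/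
open Set

/-- The paper's `{x : y ∈ Rel x}`, restricted to `[0, 1]`; its hull is the interpretable interval
`I(y)`. -/
def interpretableSet {Q : Type*} (φ Φ : Q → ℝ) (y : ℝ) : Set ℝ :=
  {x | x ∈ Icc (0 : ℝ) 1 ∧ y ∈ Icc (sInf (φ '' (Φ ⁻¹' {x}))) (sSup (φ '' (Φ ⁻¹' {x})))}

theorem eq_csInf_of_mem_of_csSup_eq_csInf {α : Type*} [ConditionallyCompleteLattice α]
    {s : Set α} {a : α} (hb : BddBelow s) (ha : BddAbove s) (hs : sSup s = sInf s)
    (has : a ∈ s) : a = sInf s := by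
  simpa [hs] using subset_Icc_csInf_csSup hb ha has

theorem apply_mem_interpretableSet {Q : Type*} {φ Φ : Q → ℝ}
    (hφ : ∀ Z, φ Z ∈ Icc (0 : ℝ) 1) (hΦ : ∀ Z, Φ Z ∈ Icc (0 : ℝ) 1) (Z : Q) :
    Φ Z ∈ interpretableSet φ Φ (φ Z) := by
  have hbdd : BddBelow (φ '' (Φ ⁻¹' {Φ Z})) ∧ BddAbove (φ '' (Φ ⁻¹' {Φ Z})) :=
    ⟨⟨0, forall_mem_image.2 fun z _ => (hφ z).1⟩, ⟨1, forall_mem_image.2 fun z _ => (hφ z).2⟩⟩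
  exact ⟨hΦ Z, subset_Icc_csInf_csSup hbdd.1 hbdd.2 (mem_image_of_mem φ rfl)⟩

theorem stmt10_general {Q : Type*} (φ Φ : Q → ℝ)
    (hφ : ∀ Z, φ Z ∈ Set.Icc (0:ℝ) 1) (hΦ : ∀ Z, Φ Z ∈ Set.Icc (0:ℝ) 1)
    (hsing : ∀ y ∈ Set.range φ,
      sSup {x | x ∈ Set.Icc (0:ℝ) 1 ∧
          y ∈ Set.Icc (sInf (φ '' (Φ ⁻¹' {x}))) (sSup (φ '' (Φ ⁻¹' {x})))} =
      sInf {x | x ∈ Set.Icc (0:ℝ) 1 ∧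
          y ∈ Set.Icc (sInf (φ '' (Φ ⁻¹' {x}))) (sSup (φ '' (Φ ⁻¹' {x})))}) :
    ∀ Z₁ Z₂ : Q, φ Z₁ = φ Z₂ → Φ Z₁ = Φ Z₂ := by
  have hΦ_eq : ∀ Z, Φ Z = sInf (interpretableSet φ Φ (φ Z)) := fun Z =>
    eq_csInf_of_mem_of_csSup_eq_csInf ⟨0, fun _ hx => hx.1.1⟩ ⟨1, fun _ hx => hx.1.2⟩
      (hsing (φ Z) ⟨Z, rfl⟩) (apply_mem_interpretableSet hφ hΦ Z)
  intro Z₁ Z₂ heq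
  rw [hΦ_eq Z₁, hΦ_eq Z₂, heq]

/-- converse characterization of perfect equitability in the large-sample
limit: with `φ, Φ : Q → [0,1]`, `Φ` surjective onto `[0,1]`,
`Rel x = Icc (sInf (φ '' Φ⁻¹ {x})) (sSup (φ '' Φ⁻¹ {x}))` and
`S y = {x ∈ [0,1] : y ∈ Rel x}`, if for every `y` in the range of `φ` the interpretable
interval is a singleton (`sSup (S y) = sInf (S y)`), then `φ(Z)` determines `Φ(Z)`. -/
theorem stmt10 {Q : Type*} (φ Φ : Q → ℝ)
    (hφ : ∀ Z, φ Z ∈ Set.Icc (0:ℝ) 1) (hΦ : ∀ Z, Φ Z ∈ Set.Icc (0:ℝ) 1)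
    (hsurj : ∀ x ∈ Set.Icc (0:ℝ) 1, ∃ Z, Φ Z = x)
    (hsing : ∀ y ∈ Set.range φ,
      sSup {x | x ∈ Set.Icc (0:ℝ) 1 ∧
          y ∈ Set.Icc (sInf (φ '' (Φ ⁻¹' {x}))) (sSup (φ '' (Φ ⁻¹' {x})))} =
      sInf {x | x ∈ Set.Icc (0:ℝ) 1 ∧
          y ∈ Set.Icc (sInf (φ '' (Φ ⁻¹' {x}))) (sSup (φ '' (Φ ⁻¹' {x})))}) :
    ∀ Z₁ Z₂ : Q, φ Z₁ = φ Z₂ → Φ Z₁ = Φ Z₂ :=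
  stmt10_general φ Φ hφ hΦ hsing
end
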